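/- Let f be an essentially bounded measurable complex-valued function on the circle ℝ/2πℤ, with Fourier coefficients a_k = (1/2π)∫₀^{2π} f(e^{iθ}) e^{−ikθ} dθ, and for each n ≥ 0 let T_n(f) be the (n+1)×(n+1) Toeplitz matrix with (k,ℓ)-entry a_{ℓ−k} for 0 ≤ k, ℓ ≤ n. Then lim_{n→∞} ‖T_n(f)‖ = ‖f‖_∞, where ‖T_n(f)‖ is the operator norm of T_n(f) acting on Euclidean ℂ^{n+1} and ‖f‖_∞ is the essential supremum norm of f. -/

import Mathlib

/-!
Let `M_f` be multiplication by `f` on `L²` of the circle. In the Fourier basis,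
`⟪e_i, M_f e_j⟫ = a_{i-j}`, so for every `K` the matrix `T_n(f)` is the compression of `M_f` to
the orthonormal family `e_K, e_{K-1}, …, e_{K-n}`. A compression never has larger norm, which
gives `‖T_n(f)‖ ≤ ‖M_f‖`. Conversely, for `θ < ‖M_f‖` pick `x` with `θ ‖x‖ < ‖M_f x‖`; truncating
the Fourier series of `x` and `M_f x` to a large finite set `s` of frequencies keeps
`θ ‖P_s M_f x‖ ‖P_s x‖ < |⟪P_s M_f x, M_f P_s x⟫|`, so `θ < ‖T_n(f)‖` as soon as a window
`[K-n, K]` contains `s`. Finally `‖M_f‖ = ‖f‖_∞`, the lower bound coming from testing `M_f` on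
the indicator of `{c < ‖f‖}` for `c < ‖f‖_∞`.
-/

open Filter Topology MeasureTheory AddCircle

local instance : Fact (0 < 2 * Real.pi) := ⟨by positivity⟩

/-- The `(n+1) × (n+1)` Toeplitz matrix of `f`, with `(k, ℓ)` entry the Fourier
coefficient `a_{ℓ - k}` of `f`. -/
noncomputable def toeplitzMat (f : AddCircle (2 * Real.pi) → ℂ) (n : ℕ) :
    Matrix (Fin (n + 1)) (Fin (n + 1)) ℂ :=
  fun k l => fourierCoeff f ((l : ℤ) - (k : ℤ))

/-- The operator norm of a square complex matrix acting on Euclidean space `ℂ^n`. -/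
noncomputable def matOpNorm {n : ℕ} (M : Matrix (Fin n) (Fin n) ℂ) : ℝ :=
  ‖LinearMap.toContinuousLinearMap (Matrix.toEuclideanLin M)‖

open scoped ENNReal

section Compression

variable {𝕜 E : Type*} [RCLike 𝕜] [NormedAddCommGroup E] [InnerProductSpace 𝕜 E]

section

variable {κ : Type*} [Fintype κ]

lemma Orthonormal.norm_sum_smul {v : κ → E} (hv : Orthonormal 𝕜 v)
    (y : EuclideanSpace 𝕜 κ) : ‖∑ k, y k • v k‖ = ‖y‖ := by
  rw [← sq_eq_sq₀ (norm_nonneg _) (norm_nonneg _), EuclideanSpace.norm_sq_eq,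
    ← inner_self_eq_norm_sq (𝕜 := 𝕜), hv.inner_sum]
  simp [RCLike.conj_mul]

variable [DecidableEq κ]

namespace ContinuousLinearMap

def compressionMatrix (A : E →L[𝕜] E) (v : κ → E) : Matrix κ κ 𝕜 :=
  Matrix.of fun k l => inner 𝕜 (v k) (A (v l))

lemma inner_toEuclideanLin_compressionMatrix (A : E →L[𝕜] E) (v : κ → E)
    (w y : EuclideanSpace 𝕜 κ) :
    inner 𝕜 w (Matrix.toEuclideanLin (A.compressionMatrix v) y) =
      inner 𝕜 (∑ k, w k • v k) (A (∑ l, y l • v l)) := by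
  simp only [PiLp.inner_apply, Matrix.toLpLin_apply, sum_inner, map_sum, map_smul, inner_sum,
    inner_smul_left, inner_smul_right, RCLike.inner_apply, Matrix.mulVec, dotProduct,
    compressionMatrix, Matrix.of_apply, Finset.mul_sum, Finset.sum_mul]
  rw [Finset.sum_comm]
  exact Finset.sum_congr rfl fun _ _ => Finset.sum_congr rfl fun _ _ => by ring

lemma opNorm_compressionMatrix_le (A : E →L[𝕜] E) {v : κ → E} (hv : Orthonormal 𝕜 v) :
    ‖LinearMap.toContinuousLinearMap (Matrix.toEuclideanLin (A.compressionMatrix v))‖ ≤ ‖A‖ := by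
  refine opNorm_le_bound _ (norm_nonneg A) fun y => ?_
  set z := Matrix.toEuclideanLin (A.compressionMatrix v) y
  have : ‖z‖ ^ 2 ≤ ‖A‖ * ‖y‖ * ‖z‖ := calc
    ‖z‖ ^ 2 = ‖inner 𝕜 z z‖ := by rw [inner_self_eq_norm_sq_to_K]; simp
    _ = ‖inner 𝕜 (∑ k, z k • v k) (A (∑ l, y l • v l))‖ := by
      rw [← inner_toEuclideanLin_compressionMatrix]
    _ ≤ ‖z‖ * (‖A‖ * ‖y‖) := by
      refine (norm_inner_le_norm _ _).trans ?_
      rw [hv.norm_sum_smul]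
      gcongr
      rw [← hv.norm_sum_smul y]
      exact A.le_opNorm _
    _ = ‖A‖ * ‖y‖ * ‖z‖ := by ring
  change ‖z‖ ≤ ‖A‖ * ‖y‖
  nlinarith [norm_nonneg z, mul_nonneg (norm_nonneg A) (norm_nonneg y)]

lemma norm_inner_le_opNorm_compressionMatrix (A : E →L[𝕜] E) {v : κ → E} (hv : Orthonormal 𝕜 v)
    (w y : EuclideanSpace 𝕜 κ) :
    ‖inner 𝕜 (∑ k, w k • v k) (A (∑ l, y l • v l))‖ ≤
      ‖LinearMap.toContinuousLinearMap (Matrix.toEuclideanLin (A.compressionMatrix v))‖ *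
        ‖∑ k, w k • v k‖ * ‖∑ l, y l • v l‖ := by
  rw [← inner_toEuclideanLin_compressionMatrix, hv.norm_sum_smul, hv.norm_sum_smul]
  refine (norm_inner_le_norm _ _).trans ?_
  rw [mul_comm _ ‖w‖, mul_assoc]
  gcongr
  exact (LinearMap.toContinuousLinearMap _).le_opNorm y

end ContinuousLinearMap

end

lemma HilbertBasis.exists_finset_lt_opNorm_compressionMatrix {ι : Type*} (b : HilbertBasis ι 𝕜 E)
    (A : E →L[𝕜] E) {θ : ℝ} (hθ : θ < ‖A‖) :
    ∃ s : Finset ι, ∀ {κ : Type*} [Fintype κ] [DecidableEq κ] (σ : κ → ι),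
      Function.Injective σ → ↑s ⊆ Set.range σ →
        θ < ‖LinearMap.toContinuousLinearMap
          (Matrix.toEuclideanLin (A.compressionMatrix (b ∘ σ)))‖ := by
  rcases lt_or_ge θ 0 with hθ0 | hθ0
  · exact ⟨∅, fun _ _ _ => hθ0.trans_le (norm_nonneg _)⟩
  obtain ⟨x, hx⟩ := A.exists_mul_lt_of_lt_opNorm hθ0 hθ
  set P : Finset ι → E → E := fun t z => ∑ i ∈ t, b.repr z i • b i
  have hP (z : E) : Tendsto (fun t => P t z) atTop (𝓝 z) := b.hasSum_repr z
  have hlim : Tendsto (fun t => ‖inner 𝕜 (P t (A x)) (A (P t x))‖ - θ * ‖P t (A x)‖ * ‖P t x‖)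
      atTop (𝓝 (‖inner 𝕜 (A x) (A x)‖ - θ * ‖A x‖ * ‖x‖)) :=
    ((hP _).inner (A.continuous.tendsto x |>.comp (hP x))).norm.sub
      ((tendsto_const_nhds.mul (hP _).norm).mul (hP x).norm)
  have hpos : 0 < ‖inner 𝕜 (A x) (A x)‖ - θ * ‖A x‖ * ‖x‖ := by
    rw [inner_self_eq_norm_sq_to_K]
    simp only [norm_pow, RCLike.norm_ofReal, abs_norm]
    have hAx : 0 < ‖A x‖ := (mul_nonneg hθ0 (norm_nonneg x)).trans_lt hx
    nlinarith [mul_pos hAx (sub_pos.mpr hx)]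
  obtain ⟨s, hs⟩ := eventually_atTop.mp (hlim.eventually (lt_mem_nhds hpos))
  refine ⟨s, fun {κ} _ _ σ hσ hsσ => ?_⟩
  have hPσ (z : E) : P (Finset.univ.map ⟨σ, hσ⟩) z =
      ∑ k, (WithLp.toLp 2 fun k => b.repr z (σ k) : EuclideanSpace 𝕜 κ) k • (b ∘ σ) k :=
    Finset.sum_map _ _ _
  have hst : s ≤ Finset.univ.map ⟨σ, hσ⟩ := fun i hi => by
    obtain ⟨k, rfl⟩ := hsσ hi
    simp
  have htrunc := hs _ hst
  rw [hPσ, hPσ, sub_pos] at htrunc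
  have hle := A.norm_inner_le_opNorm_compressionMatrix (b.orthonormal.comp σ hσ)
    (WithLp.toLp 2 fun k => b.repr (A x) (σ k)) (WithLp.toLp 2 fun k => b.repr x (σ k))
  exact lt_of_mul_lt_mul_right (lt_of_mul_lt_mul_right (htrunc.trans_le hle) (norm_nonneg _))
    (norm_nonneg _)

end Compression

namespace MeasureTheory.Lp

variable {α 𝕜 : Type*} [MeasurableSpace α] {μ : Measure α} [RCLike 𝕜]
  (p : ℝ≥0∞) [Fact (1 ≤ p)]

noncomputable def mulOperator (g : Lp 𝕜 ∞ μ) : Lp 𝕜 p μ →L[𝕜] Lp 𝕜 p μ :=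
  (ContinuousLinearMap.mul 𝕜 𝕜).holderL μ ∞ p p g

variable {p}

lemma coeFn_mulOperator (g : Lp 𝕜 ∞ μ) (h : Lp 𝕜 p μ) :
    mulOperator p g h =ᵐ[μ] fun x => g x * h x :=
  ContinuousLinearMap.coeFn_holder _ g h

lemma norm_mulOperator_le (g : Lp 𝕜 ∞ μ) : ‖mulOperator p g‖ ≤ ‖g‖ :=
  ContinuousLinearMap.opNorm_le_bound _ (norm_nonneg g) fun h =>
    (ContinuousLinearMap.norm_holder_apply_apply_le _ g h).trans <| by
      gcongr
      exact (mul_le_of_le_one_left (norm_nonneg g) (ContinuousLinearMap.opNorm_mul_le 𝕜 𝕜))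

lemma norm_le_norm_mulOperator [IsFiniteMeasure μ] (hp : p ≠ ∞) (g : Lp 𝕜 ∞ μ) :
    ‖g‖ ≤ ‖mulOperator p g‖ := by
  refine le_of_forall_lt_imp_le_of_dense fun c hc => ?_
  rcases lt_or_ge c 0 with hc0 | hc0
  · exact hc0.le.trans (norm_nonneg _)
  set S := {x | c < ‖g x‖}
  have hS : MeasurableSet S :=
    measurableSet_lt measurable_const (Lp.stronglyMeasurable g).measurable.norm
  have hSμ : μ S ≠ 0 := by
    intro hS0
    have hbound : ∀ᵐ x ∂μ, ‖g x‖ ≤ c := by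
      filter_upwards [measure_eq_zero_iff_ae_notMem.mp hS0] with x hx
      exact not_lt.mp hx
    refine hc.not_ge ?_
    rw [Lp.norm_def, eLpNorm_exponent_top]
    exact ENNReal.toReal_le_of_le_ofReal hc0 (eLpNormEssSup_le_of_ae_bound hbound)
  set h := indicatorConstLp p hS (measure_ne_top μ S) (1 : 𝕜)
  have hh : 0 < ‖h‖ := by
    rw [norm_indicatorConstLp (zero_lt_one.trans_le Fact.out).ne' hp, norm_one, one_mul]
    exact Real.rpow_pos_of_pos (ENNReal.toReal_pos hSμ (measure_ne_top μ S)) _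
  have hmul : ‖(c : 𝕜) • h‖ ≤ ‖mulOperator p g h‖ := by
    refine Lp.norm_le_norm_of_ae_le ?_
    filter_upwards [Lp.coeFn_smul (c : 𝕜) h, coeFn_mulOperator g h,
      indicatorConstLp_coeFn (p := p) (hs := hS) (hμs := measure_ne_top μ S) (c := (1 : 𝕜))]
      with x hcx hgx hx
    rw [hcx, hgx, Pi.smul_apply, hx]
    by_cases hxS : x ∈ S
    · simp [hxS, abs_of_nonneg hc0, le_of_lt (show c < ‖g x‖ from hxS)]
    · simp [hxS]
  rw [norm_smul, RCLike.norm_ofReal, abs_of_nonneg hc0] at hmul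
  exact le_of_mul_le_mul_right (hmul.trans ((mulOperator p g).le_opNorm h)) hh

lemma norm_mulOperator [IsFiniteMeasure μ] (hp : p ≠ ∞) (g : Lp 𝕜 ∞ μ) :
    ‖mulOperator p g‖ = ‖g‖ :=
  (norm_mulOperator_le g).antisymm (norm_le_norm_mulOperator hp g)

end MeasureTheory.Lp

section Fourier

variable {T : ℝ} [Fact (0 < T)]

lemma fourierCoeff_fourier_mul (f : AddCircle T → ℂ) (j k : ℤ) :
    fourierCoeff (fun t => fourier j t * f t) k = fourierCoeff f (k - j) := by
  refine integral_congr_ae (Eventually.of_forall fun t => ?_)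
  simp only [smul_eq_mul, ← mul_assoc, ← fourier_add]
  ring_nf

lemma inner_fourierBasis_mulOperator (g : Lp ℂ ∞ (haarAddCircle (T := T))) (i j : ℤ) :
    inner ℂ (fourierBasis i) (Lp.mulOperator 2 g (fourierBasis j)) = fourierCoeff g (i - j) := by
  rw [← HilbertBasis.repr_apply_apply, fourierBasis_repr,
    fourierCoeff_congr_ae (Lp.coeFn_mulOperator g _), coe_fourierBasis, ← fourierCoeff_fourier_mul]
  refine congrFun (fourierCoeff_congr_ae ?_) i
  filter_upwards [coeFn_fourierLp 2 j] with t ht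
  rw [ht, mul_comm]

end Fourier

lemma toeplitzMat_eq_compressionMatrix {f : AddCircle (2 * Real.pi) → ℂ}
    (hf : MemLp f ⊤ haarAddCircle) (n : ℕ) (K : ℤ) :
    toeplitzMat f n = (Lp.mulOperator 2 (hf.toLp f)).compressionMatrix
      (fourierBasis ∘ fun k : Fin (n + 1) => K - k) := by
  ext k l
  rw [ContinuousLinearMap.compressionMatrix, Matrix.of_apply, Function.comp_apply,
    Function.comp_apply, inner_fourierBasis_mulOperator, fourierCoeff_congr_ae hf.coeFn_toLp]
  simp only [toeplitzMat]
  ring_nf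

/-- For an essentially bounded measurable function `f` on the circle
`ℝ/2πℤ`, the operator norms of the Toeplitz matrices `T_n(f)` converge to the essential
supremum norm of `f`: `lim_{n → ∞} ‖T_n(f)‖ = ‖f‖_∞`. -/
theorem toeplitz_norm_tendsto_essSup
    (f : AddCircle (2 * Real.pi) → ℂ) (hf : MemLp f ⊤ haarAddCircle) :
    Tendsto (fun n : ℕ => matOpNorm (toeplitzMat f n)) atTop
      (𝓝 (eLpNorm f ⊤ haarAddCircle).toReal) := by
  set A := Lp.mulOperator 2 (hf.toLp f)
  have hA : ‖A‖ = (eLpNorm f ⊤ haarAddCircle).toReal :=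
    (Lp.norm_mulOperator (p := 2) ENNReal.ofNat_ne_top _).trans (Lp.norm_toLp f hf)
  have hσ (n : ℕ) (K : ℤ) : Function.Injective fun k : Fin (n + 1) => K - k :=
    fun k l hkl => Fin.ext (by simpa using hkl)
  rw [← hA]
  refine tendsto_order.2 ⟨fun θ hθ => ?_, fun θ hθ => .of_forall fun n => ?_⟩
  · obtain ⟨s, hs⟩ := fourierBasis.exists_finset_lt_opNorm_compressionMatrix A hθ
    set N := s.sup Int.natAbs
    filter_upwards [eventually_ge_atTop (2 * N)] with n hn
    rw [matOpNorm, toeplitzMat_eq_compressionMatrix hf n N]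
    refine hs _ (hσ n N) fun i hi => ?_
    have hiN : i.natAbs ≤ N := Finset.le_sup hi
    exact ⟨⟨(N - i).toNat, by omega⟩, by simp; omega⟩
  · rw [matOpNorm, toeplitzMat_eq_compressionMatrix hf n 0]
    exact (A.opNorm_compressionMatrix_le (fourierBasis.orthonormal.comp _ (hσ n 0))).trans_lt hθ
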